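/- On a probability space, let (Y_i)_{i ∈ ℕ} be independent and identically distributed Bernoulli random variables with success probability p₀ ∈ (0,1). For each N ∈ ℕ and each i ≤ N let b_{N,i} : Ω → {0,1} be random pending-status indicators satisfying (1/N)·Σ_{i≤N} (1 − b_{N,i}) → 0 almost surely, and let ρ_{N,i} ∈ [0,1] be constants. Define the random survival likelihood L_N(p) = ∏_{i≤N} [ p^{Y_i} (1−p)^{1−Y_i} ]^{b_{N,i}} · (1 − ρ_{N,i} p)^{1 − b_{N,i}} for p ∈ [0,1]. Then almost surely, every sequence (p̂_N) in [0,1] with L_N(p̂_N) = sup_{p ∈ [0,1]} L_N(p) for all N converges to p₀. -/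

import Mathlib

/-!
The likelihood `L_N` is a product of nonnegative affine functions of `p`, hence log-concave and in
particular quasiconcave on `[0, 1]`. By the strong law of large numbers the frequency of
toxicities tends to `p₀` almost surely; since pending outcomes are a vanishing fraction and each
changes a log-factor by a bounded amount, `(log L_N(q) - log L_N(p₀)) / N` tends to the negative
number `-KL(p₀ ‖ q)` for every `q ≠ p₀`. Hence eventually `L_N(q) < L_N(p₀)` at points `q` on
either side of `p₀`, and quasiconcavity traps every maximizer between them.
-/

open MeasureTheory Filter Set Real Topology ProbabilityTheory

theorem QuasiconcaveOn.min_le_of_mem_uIcc {β : Type*} [LinearOrder β] {S : Set ℝ} {f : ℝ → β}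
    (hf : QuasiconcaveOn ℝ S f) {x y z : ℝ} (hx : x ∈ S) (hy : y ∈ S) (hz : z ∈ uIcc x y) :
    min (f x) (f y) ≤ f z :=
  ((hf _).ordConnected.uIcc_subset ⟨hx, min_le_left _ _⟩ ⟨hy, min_le_right _ _⟩ hz).2

theorem min_le_rpow_mul_rpow {u v a b : ℝ} (hu : 0 ≤ u) (hv : 0 ≤ v) (ha : 0 ≤ a) (hb : 0 ≤ b)
    (hab : a + b = 1) : min u v ≤ u ^ a * v ^ b := by
  have hm : 0 ≤ min u v := le_min hu hv
  calc min u v = min u v ^ a * min u v ^ b := by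
        rw [← rpow_add' hm (by rw [hab]; exact one_ne_zero), hab, rpow_one]
    _ ≤ u ^ a * v ^ b := by
        gcongr
        exacts [min_le_left _ _, min_le_right _ _]

theorem quasiconcaveOn_prod {E ι : Type*} [AddCommMonoid E] [Module ℝ E] {s : Set E}
    {t : Finset ι} {f : ι → E → ℝ} (hs : Convex ℝ s) (hf : ∀ i ∈ t, ConcaveOn ℝ s (f i))
    (hf₀ : ∀ i ∈ t, ∀ x ∈ s, 0 ≤ f i x) :
    QuasiconcaveOn ℝ s (fun x => ∏ i ∈ t, f i x) := by
  refine quasiconcaveOn_iff_min_le.2 ⟨hs, fun x hx y hy a b ha hb hab => ?_⟩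
  calc min (∏ i ∈ t, f i x) (∏ i ∈ t, f i y)
      ≤ (∏ i ∈ t, f i x) ^ a * (∏ i ∈ t, f i y) ^ b :=
        min_le_rpow_mul_rpow (Finset.prod_nonneg fun i hi => hf₀ i hi x hx)
          (Finset.prod_nonneg fun i hi => hf₀ i hi y hy) ha hb hab
    _ = ∏ i ∈ t, f i x ^ a * f i y ^ b := by
        rw [Finset.prod_mul_distrib, finsetProd_rpow _ _ fun i hi => hf₀ i hi x hx,
          finsetProd_rpow _ _ fun i hi => hf₀ i hi y hy]
    _ ≤ ∏ i ∈ t, (a * f i x + b * f i y) :=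
        Finset.prod_le_prod
          (fun i hi => mul_nonneg (rpow_nonneg (hf₀ i hi x hx) _) (rpow_nonneg (hf₀ i hi y hy) _))
          (fun i hi => geom_mean_le_arith_mean2_weighted ha hb (hf₀ i hi x hx) (hf₀ i hi y hy) hab)
    _ ≤ ∏ i ∈ t, f i (a • x + b • y) :=
        Finset.prod_le_prod
          (fun i hi => add_nonneg (mul_nonneg ha (hf₀ i hi x hx)) (mul_nonneg hb (hf₀ i hi y hy)))
          (fun i hi => (hf i hi).2 hx hy ha hb hab)

theorem tendsto_of_quasiconcaveOn_of_le {S : Set ℝ} {L : ℕ → ℝ → ℝ} {p₀ : ℝ} {phat : ℕ → ℝ}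
    (hL : ∀ N, QuasiconcaveOn ℝ S (L N)) (hp₀ : p₀ ∈ S) (hphat : ∀ N, phat N ∈ S)
    (hmax : ∀ N, L N p₀ ≤ L N (phat N))
    (hsep : ∀ᶠ q in 𝓝[≠] p₀, ∀ᶠ N in atTop, L N q < L N p₀) :
    Tendsto phat atTop (𝓝 p₀) := by
  have hout : ∀ q, (∀ᶠ N in atTop, L N q < L N p₀) → ∀ᶠ N in atTop, q ∉ uIcc p₀ (phat N) := by
    intro q hq
    filter_upwards [hq] with N hlt hmem
    have hmin := (hL N).min_le_of_mem_uIcc hp₀ (hphat N) hmem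
    rw [min_eq_left (hmax N)] at hmin
    exact hlt.not_ge hmin
  refine tendsto_order.2 ⟨fun a ha => ?_, fun a ha => ?_⟩
  · have hleft : ∀ᶠ q in 𝓝[<] p₀, ∀ᶠ N in atTop, L N q < L N p₀ :=
      nhdsWithin_mono p₀ (fun x hx => ne_of_lt hx) hsep
    obtain ⟨q, hq, haq, hqp₀⟩ := (hleft.and (Ioo_mem_nhdsLT ha)).exists
    filter_upwards [hout q hq] with N hN
    by_contra! h
    exact hN (mem_uIcc.2 (Or.inr ⟨h.trans haq.le, hqp₀.le⟩))
  · have hright : ∀ᶠ q in 𝓝[>] p₀, ∀ᶠ N in atTop, L N q < L N p₀ :=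
      nhdsWithin_mono p₀ (fun x hx => ne_of_gt hx) hsep
    obtain ⟨q, hq, hp₀q, hqa⟩ := (hright.and (Ioo_mem_nhdsGT ha)).exists
    filter_upwards [hout q hq] with N hN
    by_contra! h
    exact hN (mem_uIcc.2 (Or.inl ⟨hp₀q.le, hqa.le.trans h⟩))

/-- Gibbs' inequality for Bernoulli laws. -/
theorem mul_log_div_add_mul_log_div_neg {p q : ℝ} (hp : p ∈ Ioo 0 1) (hq : q ∈ Ioo 0 1)
    (hne : q ≠ p) : p * log (q / p) + (1 - p) * log ((1 - q) / (1 - p)) < 0 := by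
  obtain ⟨hp0, hp1⟩ := hp
  obtain ⟨hq0, hq1⟩ := hq
  have h₁ : log (q / p) < q / p - 1 :=
    log_lt_sub_one_of_pos (by positivity) (by rwa [Ne, div_eq_one_iff_eq hp0.ne'])
  have h₂ : log ((1 - q) / (1 - p)) ≤ (1 - q) / (1 - p) - 1 :=
    log_le_sub_one_of_pos (div_pos (by linarith) (by linarith))
  have e₁ : p * (q / p - 1) = q - p := by field_simp
  have e₂ : (1 - p) * ((1 - q) / (1 - p) - 1) = p - q := by
    field_simp [(by linarith : (1 - p) ≠ 0)]; ring
  linarith [mul_lt_mul_of_pos_left h₁ hp0, mul_le_mul_of_nonneg_left h₂ (by linarith : 0 ≤ 1 - p)]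

theorem tendsto_avg_of_abs_sub_le {u v w : (N : ℕ) → Fin N → ℝ} {K a : ℝ}
    (huv : ∀ N i, |u N i - v N i| ≤ K * w N i)
    (hv : Tendsto (fun N : ℕ => (∑ i, v N i) / N) atTop (𝓝 a))
    (hw : Tendsto (fun N : ℕ => (∑ i, w N i) / N) atTop (𝓝 0)) :
    Tendsto (fun N : ℕ => (∑ i, u N i) / N) atTop (𝓝 a) := by
  have hdiff : Tendsto (fun N : ℕ => (∑ i, u N i) / N - (∑ i, v N i) / N) atTop (𝓝 0) := by
    refine squeeze_zero_norm (fun N => ?_) (by simpa using hw.const_mul K)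
    rw [← sub_div, ← Finset.sum_sub_distrib, norm_div, Real.norm_natCast, Real.norm_eq_abs,
      ← mul_div_assoc, Finset.mul_sum]
    gcongr
    exact (Finset.abs_sum_le_sum_abs _ _).trans (Finset.sum_le_sum fun i _ => huv N i)
  simpa using hdiff.add hv

theorem tendsto_avg_comp_of_tendsto_freq {y : ℕ → Bool} {p : ℝ}
    (hy : Tendsto (fun N : ℕ => (∑ i ∈ Finset.range N, if y i then (1 : ℝ) else 0) / N)
      atTop (𝓝 p)) (g : Bool → ℝ) :
    Tendsto (fun N : ℕ => (∑ i ∈ Finset.range N, g (y i)) / N) atTop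
      (𝓝 (p * g true + (1 - p) * g false)) := by
  have hg : ∀ c : Bool, g c = g false + (g true - g false) * (if c then 1 else 0) := by
    intro c; cases c <;> simp
  have hlim := (hy.const_mul (g true - g false)).const_add (g false)
  rw [show g false + (g true - g false) * p = p * g true + (1 - p) * g false by ring] at hlim
  refine hlim.congr' ?_
  filter_upwards [eventually_ne_atTop 0] with N hN
  simp_rw [hg (y _), Finset.sum_add_distrib, ← Finset.mul_sum, Finset.sum_const,
    Finset.card_range, nsmul_eq_mul]
  field_simp

/-- The factor `[p ^ y (1 - p) ^ (1 - y)] ^ b (1 - ρ p) ^ (1 - b)` of the paper, with the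
Boolean exponent `b` written as `observed`. -/
def survivalFactor (ρ : ℝ) (observed y : Bool) (p : ℝ) : ℝ :=
  if observed then (if y then p else 1 - p) else 1 - ρ * p

def survivalLikelihood (ρ : (N : ℕ) → Fin N → ℝ) (observed : (N : ℕ) → Fin N → Bool)
    (y : ℕ → Bool) (N : ℕ) (p : ℝ) : ℝ :=
  ∏ i : Fin N, survivalFactor (ρ N i) (observed N i) (y i) p

section survivalFactor

variable {ρ p : ℝ} (observed y : Bool)

theorem survivalFactor_le_one (hρ : ρ ∈ Icc 0 1) (hp : p ∈ Icc 0 1) :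
    survivalFactor ρ observed y p ≤ 1 := by
  obtain ⟨hρ0, -⟩ := hρ
  obtain ⟨hp0, hp1⟩ := hp
  unfold survivalFactor
  split_ifs <;> nlinarith

theorem mul_one_sub_le_survivalFactor (hρ : ρ ∈ Icc 0 1) (hp : p ∈ Icc 0 1) :
    p * (1 - p) ≤ survivalFactor ρ observed y p := by
  obtain ⟨hρ0, hρ1⟩ := hρ
  obtain ⟨hp0, hp1⟩ := hp
  unfold survivalFactor
  split_ifs <;> nlinarith

theorem survivalFactor_nonneg (hρ : ρ ∈ Icc 0 1) (hp : p ∈ Icc 0 1) :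
    0 ≤ survivalFactor ρ observed y p :=
  (mul_nonneg hp.1 (sub_nonneg.2 hp.2)).trans (mul_one_sub_le_survivalFactor observed y hρ hp)

theorem survivalFactor_pos (hρ : ρ ∈ Icc 0 1) (hp : p ∈ Ioo 0 1) :
    0 < survivalFactor ρ observed y p :=
  (mul_pos hp.1 (sub_pos.2 hp.2)).trans_le
    (mul_one_sub_le_survivalFactor observed y hρ (Ioo_subset_Icc_self hp))

theorem abs_log_survivalFactor_le (hρ : ρ ∈ Icc 0 1) (hp : p ∈ Ioo 0 1) :
    |log (survivalFactor ρ observed y p)| ≤ -log (p * (1 - p)) := by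
  have hlow := mul_one_sub_le_survivalFactor observed y hρ (Ioo_subset_Icc_self hp)
  rw [abs_of_nonpos (log_nonpos (survivalFactor_nonneg observed y hρ (Ioo_subset_Icc_self hp))
    (survivalFactor_le_one observed y hρ (Ioo_subset_Icc_self hp)))]
  exact neg_le_neg (log_le_log (mul_pos hp.1 (sub_pos.2 hp.2)) hlow)

variable (ρ) in
theorem concaveOn_survivalFactor : ConcaveOn ℝ univ (survivalFactor ρ observed y) := by
  refine ⟨convex_univ, fun x _ z _ a b _ _ hab => le_of_eq ?_⟩
  obtain rfl : b = 1 - a := by linarith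
  simp only [survivalFactor, smul_eq_mul]
  split_ifs <;> ring

end survivalFactor

section survivalLikelihood

variable {ρ : (N : ℕ) → Fin N → ℝ} {observed : (N : ℕ) → Fin N → Bool} {y : ℕ → Bool}

theorem survivalLikelihood_pos (hρ : ∀ N i, ρ N i ∈ Icc 0 1) (N : ℕ) {p : ℝ} (hp : p ∈ Ioo 0 1) :
    0 < survivalLikelihood ρ observed y N p :=
  Finset.prod_pos fun i _ => survivalFactor_pos _ _ (hρ N i) hp

theorem survivalLikelihood_le_one (hρ : ∀ N i, ρ N i ∈ Icc 0 1) (N : ℕ) {p : ℝ}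
    (hp : p ∈ Icc 0 1) : survivalLikelihood ρ observed y N p ≤ 1 :=
  Finset.prod_le_one (fun i _ => survivalFactor_nonneg _ _ (hρ N i) hp)
    fun i _ => survivalFactor_le_one _ _ (hρ N i) hp

theorem quasiconcaveOn_survivalLikelihood (hρ : ∀ N i, ρ N i ∈ Icc 0 1) (N : ℕ) :
    QuasiconcaveOn ℝ (Icc 0 1) (survivalLikelihood ρ observed y N) :=
  quasiconcaveOn_prod (convex_Icc 0 1)
    (fun _ _ => (concaveOn_survivalFactor _ _ _).subset (subset_univ _) (convex_Icc 0 1))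
    fun i _ _ hp => survivalFactor_nonneg _ _ (hρ N i) hp

theorem tendsto_log_survivalLikelihood_sub (hρ : ∀ N i, ρ N i ∈ Icc 0 1) {p₀ q : ℝ}
    (hp₀ : p₀ ∈ Ioo 0 1) (hq : q ∈ Ioo 0 1)
    (hy : Tendsto (fun N : ℕ => (∑ i ∈ Finset.range N, if y i then (1 : ℝ) else 0) / N)
      atTop (𝓝 p₀))
    (hpending : Tendsto (fun N : ℕ => (∑ i : Fin N, if observed N i then (0 : ℝ) else 1) / N)
      atTop (𝓝 0)) :
    Tendsto (fun N : ℕ => (log (survivalLikelihood ρ observed y N q) -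
        log (survivalLikelihood ρ observed y N p₀)) / N) atTop
      (𝓝 (p₀ * log (q / p₀) + (1 - p₀) * log ((1 - q) / (1 - p₀)))) := by
  set g : Bool → ℝ := fun c =>
    log (survivalFactor 0 true c q) - log (survivalFactor 0 true c p₀) with hg
  have hlog : ∀ N p, p ∈ Ioo 0 1 → log (survivalLikelihood ρ observed y N p) =
      ∑ i : Fin N, log (survivalFactor (ρ N i) (observed N i) (y i) p) := fun N p hp =>
    log_prod fun i _ => (survivalFactor_pos _ _ (hρ N i) hp).ne'
  have hbound : ∀ {r : ℝ} {o : Bool} (c : Bool), r ∈ Icc 0 1 →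
      |log (survivalFactor r o c q) - log (survivalFactor r o c p₀)| ≤
        -log (q * (1 - q)) + -log (p₀ * (1 - p₀)) := fun c hr =>
    (abs_sub _ _).trans (add_le_add (abs_log_survivalFactor_le _ c hr hq)
      (abs_log_survivalFactor_le _ c hr hp₀))
  have hlim : Tendsto (fun N : ℕ => (∑ i ∈ Finset.range N, g (y i)) / N) atTop
      (𝓝 (p₀ * log (q / p₀) + (1 - p₀) * log ((1 - q) / (1 - p₀)))) := by
    convert tendsto_avg_comp_of_tendsto_freq hy g using 4 <;>
      simp [hg, survivalFactor, log_div hq.1.ne' hp₀.1.ne',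
        log_div (sub_pos.2 hq.2).ne' (sub_pos.2 hp₀.2).ne']
  simp_rw [hlog _ _ hq, hlog _ _ hp₀, ← Finset.sum_sub_distrib]
  refine tendsto_avg_of_abs_sub_le (v := fun N i => g (y i))
    (K := 2 * (-log (q * (1 - q)) + -log (p₀ * (1 - p₀)))) (fun N i => ?_) ?_ hpending
  · cases hobs : observed N i
    · rw [if_neg (by simp), mul_one, two_mul]
      exact (abs_sub _ _).trans (add_le_add (hbound _ (hρ N i)) (hbound _ ⟨le_rfl, zero_le_one⟩))
    · simp [hg, survivalFactor]
  · simpa only [Fin.sum_univ_eq_sum_range (fun i => g (y i))] using hlim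

theorem eventually_survivalLikelihood_lt (hρ : ∀ N i, ρ N i ∈ Icc 0 1) {p₀ q : ℝ}
    (hp₀ : p₀ ∈ Ioo 0 1) (hq : q ∈ Ioo 0 1) (hne : q ≠ p₀)
    (hy : Tendsto (fun N : ℕ => (∑ i ∈ Finset.range N, if y i then (1 : ℝ) else 0) / N)
      atTop (𝓝 p₀))
    (hpending : Tendsto (fun N : ℕ => (∑ i : Fin N, if observed N i then (0 : ℝ) else 1) / N)
      atTop (𝓝 0)) :
    ∀ᶠ N in atTop, survivalLikelihood ρ observed y N q < survivalLikelihood ρ observed y N p₀ := by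
  filter_upwards [(tendsto_log_survivalLikelihood_sub hρ hp₀ hq hy hpending).eventually
    (gt_mem_nhds (mul_log_div_add_mul_log_div_neg hp₀ hq hne))] with N hN
  rw [← log_lt_log_iff (survivalLikelihood_pos hρ N hq) (survivalLikelihood_pos hρ N hp₀),
    ← sub_neg]
  by_contra! h
  exact hN.not_ge (div_nonneg h N.cast_nonneg)

theorem tendsto_of_survivalLikelihood_eq_sSup (hρ : ∀ N i, ρ N i ∈ Icc 0 1) {p₀ : ℝ}
    (hp₀ : p₀ ∈ Ioo 0 1)
    (hy : Tendsto (fun N : ℕ => (∑ i ∈ Finset.range N, if y i then (1 : ℝ) else 0) / N)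
      atTop (𝓝 p₀))
    (hpending : Tendsto (fun N : ℕ => (∑ i : Fin N, if observed N i then (0 : ℝ) else 1) / N)
      atTop (𝓝 0))
    {phat : ℕ → ℝ} (hphat : ∀ N, phat N ∈ Icc 0 1)
    (hsup : ∀ N, survivalLikelihood ρ observed y N (phat N) =
      sSup (survivalLikelihood ρ observed y N '' Icc 0 1)) :
    Tendsto phat atTop (𝓝 p₀) := by
  refine tendsto_of_quasiconcaveOn_of_le
    (quasiconcaveOn_survivalLikelihood (observed := observed) (y := y) hρ)
    (Ioo_subset_Icc_self hp₀) hphat (fun N => ?_) ?_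
  · rw [hsup N]
    refine le_csSup ⟨1, ?_⟩ (mem_image_of_mem _ (Ioo_subset_Icc_self hp₀))
    rintro _ ⟨p, hp, rfl⟩
    exact survivalLikelihood_le_one hρ N hp
  · filter_upwards [self_mem_nhdsWithin, nhdsWithin_le_nhds (Ioo_mem_nhds hp₀.1 hp₀.2)]
      with q hne hq
    exact eventually_survivalLikelihood_lt hρ hp₀ hq hne hy hpending

end survivalLikelihood

theorem identDistrib_of_measure_eq_true {Ω : Type*} [MeasurableSpace Ω] {P : Measure Ω}
    [IsFiniteMeasure P] {Y Z : Ω → Bool} (hY : Measurable Y) (hZ : Measurable Z)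
    (h : P {ω | Y ω = true} = P {ω | Z ω = true}) : IdentDistrib Y Z P P := by
  refine ⟨hY.aemeasurable, hZ.aemeasurable, Measure.ext_of_singleton fun c => ?_⟩
  rw [Measure.map_apply hY (measurableSet_singleton c),
    Measure.map_apply hZ (measurableSet_singleton c)]
  cases c
  · have hcompl : ∀ X : Ω → Bool, X ⁻¹' {false} = (X ⁻¹' {true})ᶜ := fun X => by ext; simp
    rw [hcompl, hcompl, measure_compl (hY (measurableSet_singleton true)) (measure_ne_top _ _),
      measure_compl (hZ (measurableSet_singleton true)) (measure_ne_top _ _)]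
    exact congrArg (P univ - ·) h
  · exact h

theorem ae_tendsto_freq_of_iIndepFun {Ω : Type*} [MeasurableSpace Ω] {P : Measure Ω}
    [IsProbabilityMeasure P] {p : ℝ} (hp : 0 ≤ p) {Y : ℕ → Ω → Bool}
    (hY_meas : ∀ i, Measurable (Y i)) (hY_indep : iIndepFun Y P)
    (hY_dist : ∀ i, P {ω | Y i ω = true} = ENNReal.ofReal p) :
    ∀ᵐ ω ∂P, Tendsto (fun N : ℕ => (∑ i ∈ Finset.range N, if Y i ω then (1 : ℝ) else 0) / N)
      atTop (𝓝 p) := by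
  set φ : Bool → ℝ := fun c => if c then 1 else 0 with hφ
  have hφ_meas : Measurable φ := .of_discrete
  have hmean : P[φ ∘ Y 0] = p := by
    have : φ ∘ Y 0 = {ω | Y 0 ω = true}.indicator 1 := by
      ext ω; simp [hφ, indicator_apply]
    rw [this, integral_indicator_one (s := {ω | Y 0 ω = true})
      (hY_meas 0 (measurableSet_singleton true)), measureReal_def, hY_dist 0,
      ENNReal.toReal_ofReal hp]
  have hslln := strong_law_ae (fun i => φ ∘ Y i)
    (Integrable.of_bound (hφ_meas.comp (hY_meas 0)).aestronglyMeasurable 1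
      (ae_of_all _ fun ω => by by_cases h : Y 0 ω <;> simp [hφ, h]))
    (fun i j hij => (hY_indep.indepFun hij).comp hφ_meas hφ_meas)
    (fun i => (identDistrib_of_measure_eq_true (hY_meas i) (hY_meas 0)
      ((hY_dist i).trans (hY_dist 0).symm)).comp hφ_meas)
  filter_upwards [hslln] with ω hω
  rw [hmean] at hω
  simpa only [smul_eq_mul, div_eq_inv_mul, Function.comp_apply, hφ] using hω

theorem stmt_7_general {Ω : Type*} [MeasurableSpace Ω] (P : Measure Ω) [IsProbabilityMeasure P]
    (p₀ : ℝ) (hp₀ : p₀ ∈ Set.Ioo (0:ℝ) 1)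
    (Y : ℕ → Ω → Bool)
    (hY_meas : ∀ i, Measurable (Y i))
    (hY_indep : ProbabilityTheory.iIndepFun Y P)
    (hY_dist : ∀ i, P {ω | Y i ω = true} = ENNReal.ofReal p₀)
    (b : (N : ℕ) → Fin N → Ω → Bool)
    (hb_pending : ∀ᵐ ω ∂P,
      Tendsto (fun N => (∑ i : Fin N, (if b N i ω then (0:ℝ) else 1)) / N)
        atTop (nhds 0))
    (ρ : (N : ℕ) → Fin N → ℝ) (hρ : ∀ N i, ρ N i ∈ Set.Icc (0:ℝ) 1)
    (L : ℕ → ℝ → Ω → ℝ)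
    (hL : ∀ N p ω, L N p ω =
      ∏ i : Fin N,
        (if b N i ω then (if Y i ω then p else 1 - p) else (1 - ρ N i * p))) :
    ∀ᵐ ω ∂P, ∀ phat : ℕ → ℝ,
      (∀ N, phat N ∈ Set.Icc (0:ℝ) 1) →
      (∀ N, L N (phat N) ω = sSup ((fun p => L N p ω) '' Set.Icc (0:ℝ) 1)) →
      Tendsto phat atTop (nhds p₀) := by
  filter_upwards [ae_tendsto_freq_of_iIndepFun hp₀.1.le hY_meas hY_indep hY_dist, hb_pending]
    with ω hfreq hpending phat hphat hsup
  simp only [hL] at hsup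
  exact tendsto_of_survivalLikelihood_eq_sSup hρ hp₀ hfreq hpending hphat hsup

/-- Stochastic version of Lemma 5.1(2): almost-sure consistency of the maximum
likelihood estimator of the toxicity probability under the random survival
likelihood, for i.i.d. Bernoulli(p₀) outcomes with a vanishing fraction of
pending outcomes. -/
theorem stmt_7 {Ω : Type*} [MeasurableSpace Ω] (P : Measure Ω) [IsProbabilityMeasure P]
    (p₀ : ℝ) (hp₀ : p₀ ∈ Set.Ioo (0:ℝ) 1)
    (Y : ℕ → Ω → Bool)
    (hY_meas : ∀ i, Measurable (Y i))
    (hY_indep : ProbabilityTheory.iIndepFun Y P)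
    (hY_dist : ∀ i, P {ω | Y i ω = true} = ENNReal.ofReal p₀)
    (b : (N : ℕ) → Fin N → Ω → Bool)
    (hb_meas : ∀ N i, Measurable (b N i))
    (hb_pending : ∀ᵐ ω ∂P,
      Tendsto (fun N => (∑ i : Fin N, (if b N i ω then (0:ℝ) else 1)) / N)
        atTop (nhds 0))
    (ρ : (N : ℕ) → Fin N → ℝ) (hρ : ∀ N i, ρ N i ∈ Set.Icc (0:ℝ) 1)
    (L : ℕ → ℝ → Ω → ℝ)
    (hL : ∀ N p ω, L N p ω =
      ∏ i : Fin N,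
        (if b N i ω then (if Y i ω then p else 1 - p) else (1 - ρ N i * p))) :
    ∀ᵐ ω ∂P, ∀ phat : ℕ → ℝ,
      (∀ N, phat N ∈ Set.Icc (0:ℝ) 1) →
      (∀ N, L N (phat N) ω = sSup ((fun p => L N p ω) '' Set.Icc (0:ℝ) 1)) →
      Tendsto phat atTop (nhds p₀) :=
  stmt_7_general P p₀ hp₀ Y hY_meas hY_indep hY_dist b hb_pending ρ hρ L hL
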